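/- Let k ≥ 2, let V be a set partitioned into k classes A_1, ..., A_k each of size 2k+3, and let F be any 2-regular simple graph on V each of whose edges joins vertices in different classes (i.e., F is a 2-factor of the complete k-partite graph with parts A_1, ..., A_k). Let H be the hypergraph on V whose edges are all 2-element sets {u,w} with u, w in different classes and {u,w} not an edge of F, together with the k classes A_1, ..., A_k. Then H is a Šoltés hypergraph of diameter 2. -/

import Mathlib

variable {α : Type*} {β : Type*}

/-- A hypergraph: a finite vertex set together with a set of edges,
each an at-least-2-element subset of the vertex set. -/
structure FinHypergraph (α : Type*) where
  verts : Finset α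
  edges : Finset (Finset α)
  edge_sub : ∀ e ∈ edges, e ⊆ verts
  edge_card : ∀ e ∈ edges, 2 ≤ e.card

namespace FinHypergraph

/-- The 2-section graph of a hypergraph: two distinct vertices are adjacent
iff some edge contains both. -/
def twoSection (H : FinHypergraph α) : SimpleGraph α where
  Adj u v := u ≠ v ∧ ∃ e ∈ H.edges, u ∈ e ∧ v ∈ e
  symm := by
    exact ⟨by
    rintro u v ⟨huv, e, he, hu, hv⟩
    exact ⟨huv.symm, e, he, hv, hu⟩⟩
  loopless := by
    exact ⟨by
    rintro u ⟨h, -⟩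
    exact h rfl⟩

/-- Distance between two vertices: graph distance in the 2-section. -/
noncomputable def dist (H : FinHypergraph α) (u v : α) : ℕ :=
  H.twoSection.dist u v

/-- A hypergraph is connected if every two of its vertices are joined by a path. -/
def Connected (H : FinHypergraph α) : Prop :=
  ∀ u ∈ H.verts, ∀ v ∈ H.verts, H.twoSection.Reachable u v

/-- The Wiener index (total distance): the sum of distances over all
unordered pairs of distinct vertices. -/
noncomputable def wiener [DecidableEq α] (H : FinHypergraph α) : ℕ :=
  ∑ p ∈ H.verts.sym2.filter (fun p => ¬ p.IsDiag),
    Sym2.lift ⟨fun u v => H.dist u v, fun _ _ => SimpleGraph.dist_comm⟩ p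

/-- Vertex deletion: remove the vertex and all edges containing it. -/
def delete [DecidableEq α] (H : FinHypergraph α) (v : α) : FinHypergraph α where
  verts := H.verts.erase v
  edges := H.edges.filter fun e => v ∉ e
  edge_sub := by
    intro e he x hx
    rw [Finset.mem_filter] at he
    exact Finset.mem_erase.mpr ⟨fun h => he.2 (h ▸ hx), H.edge_sub e he.1 hx⟩
  edge_card := fun e he => H.edge_card e (Finset.mem_filter.mp he).1

/-- A Šoltés hypergraph: a connected hypergraph on at least 2 vertices such that
deleting any vertex leaves a connected hypergraph with the same Wiener index. -/
def IsSoltes [DecidableEq α] (H : FinHypergraph α) : Prop :=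
  2 ≤ H.verts.card ∧ H.Connected ∧
    ∀ v ∈ H.verts, (H.delete v).Connected ∧ (H.delete v).wiener = H.wiener

/-- The diameter: the maximum distance over unordered pairs of distinct vertices. -/
noncomputable def diam [DecidableEq α] (H : FinHypergraph α) : ℕ :=
  H.verts.offDiag.sup fun p => H.dist p.1 p.2

/-- The degree of a vertex: the number of edges containing it. -/
def degree [DecidableEq α] (H : FinHypergraph α) (v : α) : ℕ :=
  (H.edges.filter fun e => v ∈ e).card

/-- Hypergraph isomorphism: a bijection between the vertex sets mapping
edges onto edges. -/
def IsIsoTo [DecidableEq β] (H : FinHypergraph α) (H' : FinHypergraph β) : Prop :=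
  ∃ f : α → β, Set.InjOn f ↑H.verts ∧ H'.verts = H.verts.image f ∧
    H'.edges = H.edges.image fun e => e.image f

end FinHypergraph

/-! The 2-section of `H` is the complement `Fᶜ`, and in `H \ v` two vertices are adjacent unless
they are `F`-adjacent or both lie in the class `A i` of `v`. In both graphs any two non-adjacent
vertices have a common neighbour (a vertex avoiding the at most four `F`-neighbours involved, chosen
in a suitable class), so all distances are `1` or `2` and the Wiener index is `C(N, 2)` plus the
number of non-adjacent pairs. That number is `|E(F)| = n` for `H` and `(n - 2) + C(2k + 2, 2)` for
`H \ v`, where `n = k (2k + 3)`. Since `C(2k + 2, 2) = n + 1` and `C(n, 2) = C(n - 1, 2) + n - 1`,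
the two Wiener indices agree. -/

open Finset

lemma Finset.card_filter_not_isDiag_sym2 [DecidableEq α] (s : Finset α) :
    #{z ∈ s.sym2 | ¬z.IsDiag} = (#s).choose 2 := by
  rw [← Sym2.card_image_offDiag s]
  congr 1
  ext z
  induction z using Sym2.ind with
  | _ u w =>
    simp only [mem_filter, mk_mem_sym2_iff, Sym2.mk_isDiag_iff, mem_image, mem_offDiag,
      Prod.exists, Function.uncurry_apply_pair, Sym2.eq_iff]
    aesop

lemma Nat.choose_two_two_mul_add_two (k : ℕ) : (2 * k + 2).choose 2 = k * (2 * k + 3) + 1 := by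
  rw [Nat.choose_two_right, show 2 * k + 2 - 1 = 2 * k + 1 by omega]
  exact Nat.div_eq_of_eq_mul_left two_pos (by ring)

lemma Nat.choose_two_sub_one_add_sub_one (n : ℕ) : (n - 1).choose 2 + (n - 1) = n.choose 2 := by
  cases n with
  | zero => rfl
  | succ m => rw [Nat.add_sub_cancel, Nat.choose_succ_succ', Nat.choose_one_right, add_comm]

lemma Finset.card_univ_eq_sum_card_of_partition [Fintype α] [DecidableEq α] {ι : Type*}
    [Fintype ι] {A : ι → Finset α} (hdisj : ∀ i j, i ≠ j → Disjoint (A i) (A j))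
    (hcover : ∀ x, ∃ i, x ∈ A i) :
    Fintype.card α = ∑ i, #(A i) := by
  have huniv : (univ : Finset α) = univ.biUnion A := by
    ext x
    simpa using hcover x
  rw [← card_univ, huniv, card_biUnion fun i _ j _ hij => hdisj i j hij]

namespace SimpleGraph

variable {V : Type*} {G : SimpleGraph V}

lemma dist_eq_two_of_commonNeighbors_nonempty {u w : V} (hne : u ≠ w) (hadj : ¬G.Adj u w)
    (h : (G.commonNeighbors u w).Nonempty) : G.dist u w = 2 := by
  rw [dist, edist_eq_two_iff.mpr ⟨hne, hadj, h⟩]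
  rfl

lemma exists_mem_not_adj_of_degree_add_lt_card [Fintype V] [DecidableRel G.Adj] [DecidableEq V]
    {S : Finset V} (B : Finset V) (u w : V) (h : G.degree u + G.degree w + #B < #S) :
    ∃ x ∈ S, x ∉ B ∧ ¬G.Adj u x ∧ ¬G.Adj w x := by
  have hcard : #(G.neighborFinset u ∪ G.neighborFinset w ∪ B) < #S :=
    calc _ ≤ #(G.neighborFinset u) + #(G.neighborFinset w) + #B :=
          (card_union_le _ _).trans (Nat.add_le_add_right (card_union_le _ _) _)
      _ < #S := by simpa using h
  obtain ⟨x, hxS, hx⟩ := exists_mem_notMem_of_card_lt_card hcard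
  simp only [mem_union, mem_neighborFinset, not_or] at hx
  exact ⟨x, hxS, hx.2, hx.1.1, hx.1.2⟩

lemma IsRegularOfDegree.two_mul_card_edgeFinset [Fintype V] [DecidableRel G.Adj] {d : ℕ}
    (hG : G.IsRegularOfDegree d) : 2 * #G.edgeFinset = d * Fintype.card V := by
  rw [← sum_degrees_eq_twice_card_edges, sum_congr rfl fun v _ => hG.degree_eq v, sum_const,
    card_univ, smul_eq_mul, mul_comm]

lemma card_filter_notMem_edgeFinset_add_degree [Fintype V] [DecidableEq V] (G : SimpleGraph V)
    [DecidableRel G.Adj] (v : V) :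
    #{e ∈ G.edgeFinset | v ∉ e} + G.degree v = #G.edgeFinset := by
  rw [← G.card_incidenceFinset_eq_degree, G.incidenceFinset_eq_filter, add_comm,
    card_filter_add_card_filter_not]

lemma disjoint_edgeFinset_sym2 [Fintype V] [DecidableEq V] (G : SimpleGraph V)
    [DecidableRel G.Adj] {s : Finset V}
    (hs : ∀ u ∈ s, ∀ w ∈ s, ¬G.Adj u w) : Disjoint G.edgeFinset s.sym2 := by
  rw [Finset.disjoint_left]
  intro z hG hs'
  induction z using Sym2.ind with
  | _ u w =>
    rw [mk_mem_sym2_iff] at hs'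
    exact hs u hs'.1 w hs'.2 (by simpa using hG)

end SimpleGraph

namespace FinHypergraph

def HasCommonNeighbors (H : FinHypergraph α) : Prop :=
  ∀ u ∈ H.verts, ∀ w ∈ H.verts, u ≠ w → ¬H.twoSection.Adj u w →
    (H.twoSection.commonNeighbors u w).Nonempty

namespace HasCommonNeighbors

variable {H : FinHypergraph α}

lemma dist_le_two (hH : H.HasCommonNeighbors) {u w : α} (hu : u ∈ H.verts) (hw : w ∈ H.verts) :
    H.dist u w ≤ 2 := by
  by_cases huw : u = w
  · simp [dist, huw]
  by_cases hadj : H.twoSection.Adj u w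
  · simp [dist, SimpleGraph.dist_eq_one_iff_adj.mpr hadj]
  · exact (SimpleGraph.dist_eq_two_of_commonNeighbors_nonempty huw hadj
      (hH u hu w hw huw hadj)).le

lemma connected (hH : H.HasCommonNeighbors) : H.Connected := by
  intro u hu w hw
  by_cases huw : u = w
  · exact huw ▸ .rfl
  by_cases hadj : H.twoSection.Adj u w
  · exact hadj.reachable
  · obtain ⟨x, hux, hxw⟩ := hH u hu w hw huw hadj
    exact hux.reachable.trans hxw.symm.reachable

lemma wiener_eq [DecidableEq α] (hH : H.HasCommonNeighbors) {N : Finset (Sym2 α)}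
    (hN : ∀ z, z ∈ N ↔ z ∈ H.verts.sym2 ∧ ¬z.IsDiag ∧ z ∉ H.twoSection.edgeSet) :
    H.wiener = (#H.verts).choose 2 + #N := by
  set P := {z ∈ H.verts.sym2 | ¬z.IsDiag}
  have hpair : ∀ z ∈ P, Sym2.lift ⟨fun u v => H.dist u v, fun _ _ => SimpleGraph.dist_comm⟩ z
      = 1 + if z ∈ N then 1 else 0 := by
    intro z hz
    induction z using Sym2.ind with
    | _ u w =>
      simp only [P, mem_filter, mk_mem_sym2_iff, Sym2.mk_isDiag_iff] at hz
      obtain ⟨⟨hu, hw⟩, huw⟩ := hz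
      have hmem : s(u, w) ∈ N ↔ ¬H.twoSection.Adj u w := by
        simp only [hN, mk_mem_sym2_iff, Sym2.mk_isDiag_iff, SimpleGraph.mem_edgeSet]
        exact ⟨fun h => h.2.2, fun h => ⟨⟨hu, hw⟩, huw, h⟩⟩
      simp only [Sym2.lift_mk, dist]
      by_cases hadj : H.twoSection.Adj u w
      · rw [if_neg fun h => hmem.mp h hadj, SimpleGraph.dist_eq_one_iff_adj.mpr hadj]
      · rw [if_pos (hmem.mpr hadj), SimpleGraph.dist_eq_two_of_commonNeighbors_nonempty huw hadj
          (hH u hu w hw huw hadj)]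
  have hNP : {z ∈ P | z ∈ N} = N := by
    ext z
    simp only [P, mem_filter, hN]
    tauto
  rw [wiener, sum_congr rfl hpair, sum_add_distrib, sum_boole, hNP, sum_const,
    card_filter_not_isDiag_sym2]
  simp

lemma diam_eq_two [DecidableEq α] (hH : H.HasCommonNeighbors) {u w : α} (hu : u ∈ H.verts)
    (hw : w ∈ H.verts) (huw : u ≠ w) (hadj : ¬H.twoSection.Adj u w) : H.diam = 2 := by
  rw [diam]
  refine le_antisymm (Finset.sup_le fun p hp => ?_) ?_
  · rw [mem_offDiag] at hp
    exact hH.dist_le_two hp.1 hp.2.1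
  · have h2 : H.dist u w = 2 :=
      SimpleGraph.dist_eq_two_of_commonNeighbors_nonempty huw hadj (hH u hu w hw huw hadj)
    rw [← h2]
    exact le_sup (f := fun p : α × α => H.dist p.1 p.2) (s := H.verts.offDiag) (b := (u, w))
      (mem_offDiag.mpr ⟨hu, hw, huw⟩)

end HasCommonNeighbors

lemma hasCommonNeighbors_of_twoSection_eq_compl [Fintype α] [DecidableEq α] {H : FinHypergraph α}
    {F : SimpleGraph α} [DecidableRel F.Adj] {d : ℕ} (hH : H.twoSection = Fᶜ)
    (hdeg : ∀ v, F.degree v ≤ d) (hcard : 2 * d + 2 < Fintype.card α) :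
    H.HasCommonNeighbors := by
  intro u _ w _ _ _
  obtain ⟨x, -, hx, hux, hwx⟩ := F.exists_mem_not_adj_of_degree_add_lt_card {u, w} u w
    (S := univ) (by grind [card_le_two, card_univ])
  simp only [mem_insert, mem_singleton, not_or] at hx
  refine ⟨x, ?_⟩
  rw [hH, SimpleGraph.mem_commonNeighbors, SimpleGraph.compl_adj, SimpleGraph.compl_adj]
  exact ⟨⟨Ne.symm hx.1, hux⟩, ⟨Ne.symm hx.2, hwx⟩⟩

lemma wiener_eq_of_twoSection_eq_compl [Fintype α] [DecidableEq α] {H : FinHypergraph α}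
    {F : SimpleGraph α} [DecidableRel F.Adj] (hH : H.HasCommonNeighbors)
    (hverts : H.verts = univ) (hcompl : H.twoSection = Fᶜ) :
    H.wiener = (Fintype.card α).choose 2 + #F.edgeFinset := by
  rw [hH.wiener_eq (N := F.edgeFinset) fun z => ?_, hverts, card_univ]
  induction z using Sym2.ind with
  | _ u w =>
    simp only [SimpleGraph.mem_edgeFinset, SimpleGraph.mem_edgeSet, hverts, hcompl,
      SimpleGraph.compl_adj, mk_mem_sym2_iff, mem_univ, Sym2.mk_isDiag_iff]
    grind [F.ne_of_adj]

section CrossComplement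

variable {ι : Type*} [Fintype ι] [Fintype α] [DecidableEq α] {A : ι → Finset α}
  {F : SimpleGraph α} [DecidableRel F.Adj] {H : FinHypergraph α}

variable (A F) in
def crossComplEdges : Finset (Finset α) :=
  (((Finset.univ : Finset (α × α)).filter fun p =>
      (∀ i, ¬(p.1 ∈ A i ∧ p.2 ∈ A i)) ∧ ¬ F.Adj p.1 p.2).image
    fun p => ({p.1, p.2} : Finset α))
    ∪ Finset.image A Finset.univ

lemma pair_mem_crossComplEdges {u w : α} (hcls : ∀ i, ¬(u ∈ A i ∧ w ∈ A i)) (hF : ¬F.Adj u w) :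
    {u, w} ∈ crossComplEdges A F :=
  mem_union_left _ (mem_image.mpr ⟨(u, w), mem_filter.mpr ⟨mem_univ _, hcls, hF⟩, rfl⟩)

lemma class_mem_crossComplEdges (i : ι) : A i ∈ crossComplEdges A F :=
  mem_union_right _ (mem_image_of_mem A (mem_univ i))

lemma not_adj_of_mem_crossComplEdges (hcross : ∀ u w, F.Adj u w → ∀ i, ¬(u ∈ A i ∧ w ∈ A i))
    {e : Finset α} (he : e ∈ crossComplEdges A F) {u w : α} (hu : u ∈ e) (hw : w ∈ e) :
    ¬F.Adj u w := by
  simp only [crossComplEdges, mem_union, mem_image, mem_filter, mem_univ, true_and] at he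
  rcases he with ⟨⟨a, b⟩, ⟨-, hab⟩, rfl⟩ | ⟨i, rfl⟩
  · simp only [mem_insert, mem_singleton] at hu hw
    rcases hu with rfl | rfl <;> rcases hw with rfl | rfl
    exacts [F.loopless.irrefl _, hab, fun h => hab h.symm, F.loopless.irrefl _]
  · exact fun h => hcross u w h i ⟨hu, hw⟩

lemma eq_of_mem_crossComplEdges (hdisj : ∀ i j, i ≠ j → Disjoint (A i) (A j))
    {e : Finset α} (he : e ∈ crossComplEdges A F) {u w : α} (hu : u ∈ e) (hw : w ∈ e)
    (huw : u ≠ w) {i : ι} (hui : u ∈ A i) (hwi : w ∈ A i) : e = A i := by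
  simp only [crossComplEdges, mem_union, mem_image, mem_filter, mem_univ, true_and] at he
  rcases he with ⟨⟨a, b⟩, ⟨hab, -⟩, rfl⟩ | ⟨j, rfl⟩
  · simp only [mem_insert, mem_singleton] at hu hw
    rcases hu with rfl | rfl <;> rcases hw with rfl | rfl
    exacts [absurd rfl huw, absurd ⟨hui, hwi⟩ (hab i), absurd ⟨hwi, hui⟩ (hab i), absurd rfl huw]
  · obtain rfl | hji := eq_or_ne j i
    · rfl
    · exact absurd hui (disjoint_left.mp (hdisj j i hji) hu)

lemma twoSection_eq_compl (hcross : ∀ u w, F.Adj u w → ∀ i, ¬(u ∈ A i ∧ w ∈ A i))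
    (hedges : H.edges = crossComplEdges A F) : H.twoSection = Fᶜ := by
  ext u w
  rw [SimpleGraph.compl_adj]
  constructor
  · rintro ⟨huw, e, he, hu, hw⟩
    exact ⟨huw, not_adj_of_mem_crossComplEdges hcross (hedges ▸ he) hu hw⟩
  · rintro ⟨huw, hF⟩
    refine ⟨huw, ?_⟩
    by_cases hcls : ∃ i, u ∈ A i ∧ w ∈ A i
    · obtain ⟨i, hui, hwi⟩ := hcls
      exact ⟨A i, hedges ▸ class_mem_crossComplEdges i, hui, hwi⟩
    · push Not at hcls
      exact ⟨{u, w}, hedges ▸ pair_mem_crossComplEdges (fun i h => hcls i h.1 h.2) hF,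
        by simp, by simp⟩

lemma delete_twoSection_adj_iff (hdisj : ∀ i j, i ≠ j → Disjoint (A i) (A j))
    (hcross : ∀ u w, F.Adj u w → ∀ i, ¬(u ∈ A i ∧ w ∈ A i))
    (hedges : H.edges = crossComplEdges A F) {v : α} {i : ι} (hv : v ∈ A i) {u w : α} :
    (H.delete v).twoSection.Adj u w ↔
      u ≠ w ∧ u ≠ v ∧ w ≠ v ∧ ¬F.Adj u w ∧ ¬(u ∈ A i ∧ w ∈ A i) := by
  constructor
  · rintro ⟨huw, e, he, hu, hw⟩
    obtain ⟨he, hve⟩ := mem_filter.mp he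
    rw [hedges] at he
    refine ⟨huw, fun h => hve (h ▸ hu), fun h => hve (h ▸ hw),
      not_adj_of_mem_crossComplEdges hcross he hu hw, fun ⟨hui, hwi⟩ => hve ?_⟩
    exact eq_of_mem_crossComplEdges hdisj he hu hw huw hui hwi ▸ hv
  · rintro ⟨huw, huv, hwv, hF, hcls⟩
    refine ⟨huw, ?_⟩
    by_cases hcls' : ∃ j, u ∈ A j ∧ w ∈ A j
    · obtain ⟨j, huj, hwj⟩ := hcls'
      have hji : j ≠ i := by rintro rfl; exact hcls ⟨huj, hwj⟩
      exact ⟨A j, mem_filter.mpr ⟨hedges ▸ class_mem_crossComplEdges j,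
        disjoint_right.mp (hdisj j i hji) hv⟩, huj, hwj⟩
    · push Not at hcls'
      refine ⟨{u, w}, mem_filter.mpr ⟨hedges ▸ pair_mem_crossComplEdges
        (fun j h => hcls' j h.1 h.2) hF, ?_⟩, by simp, by simp⟩
      simp only [mem_insert, mem_singleton, not_or]
      exact ⟨huv.symm, hwv.symm⟩

lemma delete_hasCommonNeighbors [Nontrivial ι] (hdisj : ∀ i j, i ≠ j → Disjoint (A i) (A j))
    (hcover : ∀ x, ∃ i, x ∈ A i) (hcross : ∀ u w, F.Adj u w → ∀ i, ¬(u ∈ A i ∧ w ∈ A i))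
    (hedges : H.edges = crossComplEdges A F) {d : ℕ} (hdeg : ∀ v, F.degree v ≤ d)
    (hsize : ∀ i, 2 * d + 1 < #(A i)) (v : α) : (H.delete v).HasCommonNeighbors := by
  obtain ⟨i, hv⟩ := hcover v
  have hnotMem : ∀ {x j}, x ∈ A j → j ≠ i → x ∉ A i := fun hx hji =>
    disjoint_left.mp (hdisj _ _ hji) hx
  simp only [HasCommonNeighbors, Set.Nonempty, SimpleGraph.mem_commonNeighbors,
    delete_twoSection_adj_iff hdisj hcross hedges hv]
  intro u hu w hw huw hnadj
  have huv : u ≠ v := (mem_erase.mp hu).1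
  have hwv : w ≠ v := (mem_erase.mp hw).1
  -- for an `F`-edge `ab` with `a` outside the class of `v`, a vertex in the class of `a`
  -- avoiding `a` and the `F`-neighbours of `b` is a common neighbour
  have hedge : ∀ a b, a ≠ v → b ≠ v → F.Adj a b → a ∉ A i → ∃ x,
      (a ≠ x ∧ a ≠ v ∧ x ≠ v ∧ ¬F.Adj a x ∧ ¬(a ∈ A i ∧ x ∈ A i)) ∧
      (b ≠ x ∧ b ≠ v ∧ x ≠ v ∧ ¬F.Adj b x ∧ ¬(b ∈ A i ∧ x ∈ A i)) := by
    intro a b hav hbv hab hai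
    obtain ⟨j, haj⟩ := hcover a
    have hji : j ≠ i := by rintro rfl; exact hai haj
    obtain ⟨x, hxj, hxa, hax, hbx⟩ := F.exists_mem_not_adj_of_degree_add_lt_card {a} a b
      (S := A j) (by grind [card_singleton])
    have hxv : x ≠ v := by rintro rfl; exact hnotMem hxj hji hv
    have hbx' : b ≠ x := by rintro rfl; exact hcross a b hab j ⟨haj, hxj⟩
    exact ⟨x, ⟨Ne.symm (by simpa using hxa), hav, hxv, hax, fun h => hai h.1⟩,
      ⟨hbx', hbv, hxv, hbx, fun h => hnotMem hxj hji h.2⟩⟩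
  by_cases hF : F.Adj u w
  · by_cases hui : u ∈ A i
    · have hwi : w ∉ A i := fun hwi => hcross u w hF i ⟨hui, hwi⟩
      obtain ⟨x, hwx, hux⟩ := hedge w u hwv huv hF.symm hwi
      exact ⟨x, hux, hwx⟩
    · exact hedge u w huv hwv hF hui
  · have ⟨hui, hwi⟩ : u ∈ A i ∧ w ∈ A i := by tauto
    obtain ⟨j, hji⟩ := exists_ne i
    obtain ⟨x, hxj, -, hux, hwx⟩ := F.exists_mem_not_adj_of_degree_add_lt_card ∅ u w
      (S := A j) (by grind [card_empty])
    have hxi := hnotMem hxj hji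
    exact ⟨x, ⟨by grind, huv, by grind, hux, fun h => hxi h.2⟩,
      ⟨by grind, hwv, by grind, hwx, fun h => hxi h.2⟩⟩

lemma wiener_delete_add_degree (hdisj : ∀ i j, i ≠ j → Disjoint (A i) (A j))
    (hcross : ∀ u w, F.Adj u w → ∀ i, ¬(u ∈ A i ∧ w ∈ A i))
    (hedges : H.edges = crossComplEdges A F) (hverts : H.verts = univ) {v : α} {i : ι}
    (hv : v ∈ A i) (hHv : (H.delete v).HasCommonNeighbors) :
    (H.delete v).wiener + F.degree v =
      (Fintype.card α - 1).choose 2 + #F.edgeFinset + (#(A i) - 1).choose 2 := by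
  have hverts' : (H.delete v).verts = univ.erase v := hverts ▸ rfl
  have hN : ∀ z, z ∈ {e ∈ F.edgeFinset | v ∉ e} ∪ {e ∈ ((A i).erase v).sym2 | ¬e.IsDiag} ↔
      z ∈ (H.delete v).verts.sym2 ∧ ¬z.IsDiag ∧ z ∉ (H.delete v).twoSection.edgeSet := by
    intro z
    induction z using Sym2.ind with
    | _ u w =>
      simp only [mem_union, mem_filter, SimpleGraph.mem_edgeFinset, SimpleGraph.mem_edgeSet,
        Sym2.mem_iff, mk_mem_sym2_iff, mem_erase, Sym2.mk_isDiag_iff, hverts', mem_univ,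
        delete_twoSection_adj_iff hdisj hcross hedges hv]
      grind [F.ne_of_adj]
  have hdisjoint : Disjoint {e ∈ F.edgeFinset | v ∉ e} {e ∈ ((A i).erase v).sym2 | ¬e.IsDiag} :=
    (F.disjoint_edgeFinset_sym2 fun u hu w hw h => hcross u w h i ⟨hu, hw⟩).mono
      (filter_subset _ _) ((filter_subset _ _).trans (sym2_mono (erase_subset _ _)))
  rw [hHv.wiener_eq hN, card_union_of_disjoint hdisjoint, card_filter_not_isDiag_sym2,
    card_erase_of_mem hv, hverts', card_erase_of_mem (mem_univ v), card_univ,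
    ← F.card_filter_notMem_edgeFinset_add_degree v]
  ring

end CrossComplement

end FinHypergraph

open FinHypergraph in
theorem stmt19 {α : Type*} [Fintype α] [DecidableEq α]
    (k : ℕ) (hk : 2 ≤ k)
    (A : Fin k → Finset α)
    (hdisj : ∀ i j : Fin k, i ≠ j → Disjoint (A i) (A j))
    (hcover : ∀ x : α, ∃ i, x ∈ A i)
    (hsize : ∀ i, (A i).card = 2 * k + 3)
    (F : SimpleGraph α) [DecidableRel F.Adj]
    (hreg : ∀ v : α, F.degree v = 2)
    (hcross : ∀ u w : α, F.Adj u w → ∀ i, ¬(u ∈ A i ∧ w ∈ A i))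
    (H : FinHypergraph α)
    (hverts : H.verts = Finset.univ)
    (hedges : H.edges =
      (((Finset.univ : Finset (α × α)).filter fun p =>
          (∀ i, ¬(p.1 ∈ A i ∧ p.2 ∈ A i)) ∧ ¬ F.Adj p.1 p.2).image
        fun p => ({p.1, p.2} : Finset α))
        ∪ Finset.image A Finset.univ) :
    H.IsSoltes ∧ H.diam = 2 := by
  have : Nontrivial (Fin k) := Fin.nontrivial_iff_two_le.mpr hk
  have hn : Fintype.card α = k * (2 * k + 3) := by
    simp [card_univ_eq_sum_card_of_partition hdisj hcover, hsize]
  have hn14 : 14 ≤ Fintype.card α := by rw [hn]; nlinarith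
  have hE : #F.edgeFinset = Fintype.card α := by
    have := SimpleGraph.IsRegularOfDegree.two_mul_card_edgeFinset hreg
    omega
  have hdeg : ∀ v, F.degree v ≤ 2 := fun v => (hreg v).le
  -- the two `filter`s decide `∀ i : Fin k` by different instances
  replace hedges : H.edges = crossComplEdges A F := by
    rw [hedges, crossComplEdges]
    congr!
  have hcompl := twoSection_eq_compl hcross hedges
  have hH := hasCommonNeighbors_of_twoSection_eq_compl hcompl hdeg (by omega)
  obtain ⟨u⟩ : Nonempty α := Fintype.card_pos_iff.mp (by omega)
  obtain ⟨w, huw⟩ : ∃ w, F.Adj u w := (F.degree_pos_iff_exists_adj u).mp (by simp [hreg])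
  refine ⟨⟨by rw [hverts, card_univ]; omega, hH.connected, fun v _ => ?_⟩,
    hH.diam_eq_two (by simp [hverts]) (by simp [hverts]) huw.ne (by simp [hcompl, huw])⟩
  have hHv := delete_hasCommonNeighbors hdisj hcover hcross hedges hdeg (by grind) v
  obtain ⟨i, hi⟩ := hcover v
  have hWv := wiener_delete_add_degree hdisj hcross hedges hverts hi hHv
  rw [hsize, hreg, hE, show 2 * k + 3 - 1 = 2 * k + 2 by omega,
    Nat.choose_two_two_mul_add_two, ← hn] at hWv
  refine ⟨hHv.connected, ?_⟩
  rw [wiener_eq_of_twoSection_eq_compl hH hverts hcompl, hE,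
    ← Nat.choose_two_sub_one_add_sub_one]
  omega
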